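/- (Theorem 1, probabilistic form.) Consider the linear model Y = Xβ* + ε with Y ∈ ℝ^n, X ∈ ℝ^{n×p}, |supp(β*)| ≤ S, and ε independent mean-zero sub-Gaussian with variance proxy σ². Assume every column X_j of X satisfies ‖X_j‖₂ ≤ √n, and X satisfies the restricted eigenvalue condition with constant γ > 0 over the cone C(β*). Let α > 2 and λ₀ = σ √(α log p / n). Then with probability at least 1 − 2 n p^{−α/2}, every vector β̂ that is feasible for the constrained ℓ∞ problem with parameter λ₀ and satisfies ‖β̂‖₁ ≤ ‖β*‖₁ (in particular, every minimizer of ‖β‖₁ over the feasible set) obeys ‖β̂ − β*‖₂ ≤ (4σ/γ) √(α S log p). -/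

import Mathlib

open MeasureTheory ProbabilityTheory Finset

/-- The maximum absolute entry of a vector in `ℝ^n`. -/
noncomputable def linftyNorm {n : ℕ} (v : Fin n → ℝ) : ℝ := ⨆ i, |v i|

/-- Membership in the cone `C(β*)`: `‖ν_{S₀ᶜ}‖₁ ≤ ‖ν_{S₀}‖₁`, `S₀ = supp(β*)`. -/
def inCone {p : ℕ} (βstar ν : Fin p → ℝ) : Prop :=
  ∑ j ∈ Finset.univ.filter (fun j => βstar j = 0), |ν j|
    ≤ ∑ j ∈ Finset.univ.filter (fun j => βstar j ≠ 0), |ν j|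

/-- Feasibility for the constrained ℓ∞ problem: `(1/√n) ‖Y − Xβ‖_∞ ≤ λ₀`. -/
noncomputable def feasible {n p : ℕ} (Y : Fin n → ℝ) (X : Matrix (Fin n) (Fin p) ℝ)
    (lam₀ : ℝ) (β : Fin p → ℝ) : Prop :=
  (1 / Real.sqrt n) * linftyNorm (fun i => Y i - X.mulVec β i) ≤ lam₀

/-!
On the event that every `|ε i|` is at most `t = σ √(α log p)`, whose complement has probability
at most `n · 2 p^{-α/2}` by the union bound, the argument is deterministic. Both `β*` and any
feasible `β̂` leave residuals bounded by `t` entrywise, so `ν = β̂ - β*` has `|(Xν)_i| ≤ 2t`, and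
the column normalization turns this into `‖Xν‖₂² ≤ 2nt ‖ν‖₁`. The condition `‖β̂‖₁ ≤ ‖β*‖₁`
puts `ν` in the cone, where `‖ν‖₁ ≤ 2 √S ‖ν‖₂`; the restricted eigenvalue condition then gives
`γ ‖ν‖₂² ≤ 4t √S ‖ν‖₂`.
-/

open Matrix

lemma abs_le_linftyNorm {n : ℕ} (v : Fin n → ℝ) (i : Fin n) : |v i| ≤ linftyNorm v :=
  le_ciSup (f := fun i => |v i|) (Set.finite_range _).bddAbove i

lemma abs_sub_mulVec_le_of_feasible {n p : ℕ} {Y : Fin n → ℝ} {X : Matrix (Fin n) (Fin p) ℝ}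
    {lam₀ : ℝ} {β : Fin p → ℝ} (h : feasible Y X lam₀ β) (i : Fin n) :
    |Y i - (X *ᵥ β) i| ≤ √n * lam₀ := by
  have hn : 0 < √(n : ℝ) := Real.sqrt_pos.2 (by exact_mod_cast i.pos)
  rw [feasible, one_div_mul_eq_div, div_le_iff₀' hn] at h
  exact (abs_le_linftyNorm _ i).trans h

lemma abs_sum_mul_le_card_mul {ι : Type*} [Fintype ι] {x v : ι → ℝ} {t : ℝ}
    (hx : √(∑ i, x i ^ 2) ≤ √(Fintype.card ι)) (ht : 0 ≤ t) (hv : ∀ i, |v i| ≤ t) :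
    |∑ i, x i * v i| ≤ Fintype.card ι * t := by
  have hv2 : √(∑ i, |v i| ^ 2) ≤ √(Fintype.card ι) * t := by
    rw [← Real.sqrt_sq ht, ← Real.sqrt_mul (Nat.cast_nonneg _)]
    refine Real.sqrt_le_sqrt ?_
    simpa using sum_le_sum fun i (_ : i ∈ univ) => pow_le_pow_left₀ (abs_nonneg _) (hv i) 2
  calc |∑ i, x i * v i| ≤ ∑ i, |x i| * |v i| := by
        simpa only [abs_mul] using abs_sum_le_sum_abs (fun i => x i * v i) univ
    _ ≤ √(∑ i, |x i| ^ 2) * √(∑ i, |v i| ^ 2) := Real.sum_mul_le_sqrt_mul_sqrt _ _ _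
    _ ≤ √(Fintype.card ι) * (√(Fintype.card ι) * t) := by
        simp only [sq_abs] at hv2 ⊢
        gcongr
    _ = Fintype.card ι * t := by rw [← mul_assoc, Real.mul_self_sqrt (Nat.cast_nonneg _)]

/-- `‖Xν‖₂² = ⟪ν, XᵀXν⟫ ≤ ‖ν‖₁ ‖XᵀXν‖_∞`, and `(XᵀXν)_j` pairs a column of norm at most `√n`
with `Xν`. -/
lemma sum_sq_mulVec_le {n p : ℕ} {X : Matrix (Fin n) (Fin p) ℝ} {ν : Fin p → ℝ} {s : ℝ}
    (hcol : ∀ j, √(∑ i, X i j ^ 2) ≤ √n) (hs : 0 ≤ s) (hXν : ∀ i, |(X *ᵥ ν) i| ≤ s) :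
    ∑ i, (X *ᵥ ν) i ^ 2 ≤ n * s * ∑ j, |ν j| := by
  have hcorr : ∀ j, |((X *ᵥ ν) ᵥ* X) j| ≤ n * s := fun j => by
    simpa [vecMul, dotProduct, mul_comm] using
      abs_sum_mul_le_card_mul (x := fun i => X i j) (by simpa using hcol j) hs hXν
  calc ∑ i, (X *ᵥ ν) i ^ 2 = ∑ j, ((X *ᵥ ν) ᵥ* X) j * ν j := by
        simpa [dotProduct, sq] using dotProduct_mulVec (X *ᵥ ν) X ν
    _ ≤ ∑ j, n * s * |ν j| := sum_le_sum fun j _ => (le_abs_self _).trans <| by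
        rw [abs_mul]
        exact mul_le_mul_of_nonneg_right (hcorr j) (abs_nonneg _)
    _ = n * s * ∑ j, |ν j| := (mul_sum _ _ _).symm

lemma inCone_sub_of_sum_abs_le {p : ℕ} {βstar βhat : Fin p → ℝ}
    (hl1 : ∑ j, |βhat j| ≤ ∑ j, |βstar j|) : inCone βstar (βhat - βstar) := by
  classical
  set S₀ := univ.filter fun j => βstar j ≠ 0
  have hcompl : univ.filter (fun j => βstar j = 0) = S₀ᶜ := by ext j; simp [S₀]
  have hoff : ∀ j ∈ S₀ᶜ, βstar j = 0 := by simp [S₀]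
  have hstar : ∑ j, |βstar j| = ∑ j ∈ S₀, |βstar j| :=
    (sum_subset (subset_univ _) fun j _ hj => by simp [S₀] at hj; simp [hj]).symm
  have hhat : ∑ j, |βhat j| = ∑ j ∈ S₀, |βhat j| + ∑ j ∈ S₀ᶜ, |(βhat - βstar) j| := by
    rw [← sum_add_sum_compl S₀]
    congr 1
    exact sum_congr rfl fun j hj => by simp [hoff j hj]
  have hsupp : ∑ j ∈ S₀, (|βstar j| - |(βhat - βstar) j|) ≤ ∑ j ∈ S₀, |βhat j| :=
    sum_le_sum fun j _ => by
      simpa [abs_sub_comm, add_comm] using abs_sub_abs_le_abs_sub (βstar j) (βhat j)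
  rw [inCone, hcompl]
  rw [sum_sub_distrib] at hsupp
  linarith

lemma sum_abs_le_two_sqrt_mul_of_inCone {p S : ℕ} {βstar ν : Fin p → ℝ}
    (hsparse : (univ.filter fun j => βstar j ≠ 0).card ≤ S) (hν : inCone βstar ν) :
    ∑ j, |ν j| ≤ 2 * √S * √(∑ j, ν j ^ 2) := by
  classical
  set S₀ := univ.filter fun j => βstar j ≠ 0
  have hcompl : univ.filter (fun j => βstar j = 0) = S₀ᶜ := by ext j; simp [S₀]
  rw [inCone, hcompl] at hν
  have hsupp : ∑ j ∈ S₀, |ν j| ≤ √S * √(∑ j, ν j ^ 2) := by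
    rw [← Real.sqrt_mul (Nat.cast_nonneg _)]
    refine Real.le_sqrt_of_sq_le ?_
    calc (∑ j ∈ S₀, |ν j|) ^ 2 ≤ S₀.card * ∑ j ∈ S₀, |ν j| ^ 2 := sq_sum_le_card_mul_sum_sq
      _ ≤ S * ∑ j, ν j ^ 2 := by
        simp only [sq_abs]
        gcongr
        exact subset_univ _
  rw [← sum_add_sum_compl S₀]
  linarith

theorem sqrt_sum_sq_sub_le_of_abs_residual_le {n p S : ℕ} {X : Matrix (Fin n) (Fin p) ℝ}
    {βstar βhat : Fin p → ℝ} {Y : Fin n → ℝ} {γ t : ℝ}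
    (hsparse : (univ.filter fun j => βstar j ≠ 0).card ≤ S)
    (hcol : ∀ j, √(∑ i, X i j ^ 2) ≤ √n) (hγ : 0 < γ)
    (hRE : ∀ ν : Fin p → ℝ, inCone βstar ν →
      γ * ∑ j, ν j ^ 2 ≤ (1 / (n : ℝ)) * ∑ i, (X *ᵥ ν) i ^ 2)
    (ht : 0 ≤ t) (hstar : ∀ i, |Y i - (X *ᵥ βstar) i| ≤ t)
    (hhat : ∀ i, |Y i - (X *ᵥ βhat) i| ≤ t) (hl1 : ∑ j, |βhat j| ≤ ∑ j, |βstar j|) :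
    √(∑ j, (βhat j - βstar j) ^ 2) ≤ 4 * t * √S / γ := by
  set ν := βhat - βstar
  have hcone : inCone βstar ν := inCone_sub_of_sum_abs_le hl1
  have hXν : ∀ i, |(X *ᵥ ν) i| ≤ 2 * t := fun i => by
    have := abs_sub (Y i - (X *ᵥ βstar) i) (Y i - (X *ᵥ βhat) i)
    rw [sub_sub_sub_cancel_left] at this
    rw [mulVec_sub, Pi.sub_apply]
    linarith [hstar i, hhat i]
  have hquad : γ * ∑ j, ν j ^ 2 ≤ 2 * t * ∑ j, |ν j| := calc
    γ * ∑ j, ν j ^ 2 ≤ 1 / n * ∑ i, (X *ᵥ ν) i ^ 2 := hRE ν hcone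
    _ ≤ 1 / n * (n * (2 * t) * ∑ j, |ν j|) := by
        gcongr
        exact sum_sq_mulVec_le hcol (by positivity) hXν
    _ ≤ 2 * t * ∑ j, |ν j| := by
        rw [one_div_mul_eq_div, mul_assoc, mul_div_right_comm]
        exact mul_le_of_le_one_left (by positivity) (div_self_le_one _)
  change √(∑ j, ν j ^ 2) ≤ 4 * t * √S / γ
  set q := √(∑ j, ν j ^ 2)
  have hq : γ * q ^ 2 ≤ 4 * t * √S * q := calc
    γ * q ^ 2 = γ * ∑ j, ν j ^ 2 := by rw [Real.sq_sqrt (by positivity)]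
    _ ≤ 2 * t * ∑ j, |ν j| := hquad
    _ ≤ 2 * t * (2 * √S * q) := by gcongr; exact sum_abs_le_two_sqrt_mul_of_inCone hsparse hcone
    _ = 4 * t * √S * q := by ring
  rw [le_div_iff₀ hγ]
  have hc : 0 ≤ 4 * t * √S := by positivity
  nlinarith [Real.sqrt_nonneg (∑ j, ν j ^ 2)]

lemma one_sub_card_mul_le_measure_forall_abs_le {Ω ι : Type*} [MeasurableSpace Ω]
    {μ : Measure Ω} [IsProbabilityMeasure μ] [Fintype ι] (ε : ι → Ω → ℝ) {t δ : ℝ} (hδ : 0 ≤ δ)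
    (htail : ∀ i, μ {ω | t < |ε i ω|} ≤ ENNReal.ofReal δ) :
    ENNReal.ofReal (1 - Fintype.card ι * δ) ≤ μ {ω | ∀ i, |ε i ω| ≤ t} := by
  set E := {ω | ∀ i, |ε i ω| ≤ t}
  have hEc : Eᶜ = ⋃ i, {ω | t < |ε i ω|} := by ext ω; simp [E]
  have hunion : μ Eᶜ ≤ ENNReal.ofReal (Fintype.card ι * δ) := calc
    μ Eᶜ ≤ ∑ i, μ {ω | t < |ε i ω|} := hEc ▸ measure_iUnion_fintype_le μ _
    _ ≤ ∑ _i : ι, ENNReal.ofReal δ := sum_le_sum fun i _ => htail i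
    _ = ENNReal.ofReal (Fintype.card ι * δ) := by simp [ENNReal.ofReal_mul]
  rw [ENNReal.ofReal_sub _ (by positivity), ENNReal.ofReal_one, tsub_le_iff_right]
  calc 1 = μ Set.univ := measure_univ.symm
    _ ≤ μ E + μ Eᶜ := measure_univ_le_add_compl E
    _ ≤ μ E + ENNReal.ofReal (Fintype.card ι * δ) := by gcongr

lemma exp_neg_sq_div_eq_rpow {σ α x : ℝ} (hσ : σ ≠ 0) (hx : 0 < x) (hαx : 0 ≤ α * Real.log x) :
    Real.exp (-((σ * √(α * Real.log x)) ^ 2) / (2 * σ ^ 2)) = x ^ (-(α / 2)) := by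
  rw [Real.rpow_def_of_pos hx, mul_pow, Real.sq_sqrt hαx]
  congr 1
  field_simp

theorem estimation_error_prob_general
    {Ω : Type*} [MeasureSpace Ω] [IsProbabilityMeasure (ℙ : Measure Ω)]
    (n p : ℕ) (hn : 1 ≤ n) (hp : 2 ≤ p) (σ : ℝ) (hσ : 0 < σ)
    (X : Matrix (Fin n) (Fin p) ℝ) (βstar : Fin p → ℝ)
    (S : ℕ)
    (hsparse : (Finset.univ.filter (fun j => βstar j ≠ 0)).card ≤ S)
    (hcol : ∀ j, Real.sqrt (∑ i, (X i j) ^ 2) ≤ Real.sqrt n)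
    (γ : ℝ) (hγ : 0 < γ)
    (hRE : ∀ ν : Fin p → ℝ, inCone βstar ν →
      γ * ∑ j, (ν j) ^ 2 ≤ (1 / (n : ℝ)) * ∑ i, (X.mulVec ν i) ^ 2)
    (ε : Fin n → Ω → ℝ)
    (hsub : ∀ i, ∀ t : ℝ, 0 ≤ t →
      ℙ {ω | t < |ε i ω|} ≤ ENNReal.ofReal (2 * Real.exp (-(t ^ 2) / (2 * σ ^ 2))))
    (Y : Ω → Fin n → ℝ)
    (hY : ∀ ω, ∀ i, Y ω i = X.mulVec βstar i + ε i ω)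
    (α : ℝ) (hα : 2 < α)
    (lam₀ : ℝ) (hlam₀ : lam₀ = σ * Real.sqrt (α * Real.log p / n)) :
    ENNReal.ofReal (1 - 2 * n * (p : ℝ) ^ (-(α / 2)))
      ≤ ℙ {ω | ∀ βhat : Fin p → ℝ,
            feasible (Y ω) X lam₀ βhat → (∑ j, |βhat j|) ≤ (∑ j, |βstar j|) →
            Real.sqrt (∑ j, (βhat j - βstar j) ^ 2)
              ≤ (4 * σ / γ) * Real.sqrt (α * S * Real.log p)} := by
  have hαlog : 0 ≤ α * Real.log p :=
    mul_nonneg (by linarith) (Real.log_nonneg (by exact_mod_cast (by omega : 1 ≤ p)))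
  set t := σ * √(α * Real.log p) with ht
  have hlam : √n * lam₀ = t := by
    have : 0 < √(n : ℝ) := Real.sqrt_pos.2 (by exact_mod_cast hn)
    rw [hlam₀, Real.sqrt_div' _ (Nat.cast_nonneg n), ht]
    field_simp
  have htail := one_sub_card_mul_le_measure_forall_abs_le ε
      (by positivity : 0 ≤ 2 * (p : ℝ) ^ (-(α / 2))) fun i => by
    rw [← exp_neg_sq_div_eq_rpow hσ.ne' (by positivity) hαlog]
    exact hsub i t (by positivity)
  rw [Fintype.card_fin, ← mul_assoc, mul_comm (n : ℝ)] at htail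
  refine htail.trans (measure_mono fun ω hω βhat hfeas hl1 => ?_)
  calc √(∑ j, (βhat j - βstar j) ^ 2) ≤ 4 * t * √S / γ :=
        sqrt_sum_sq_sub_le_of_abs_residual_le hsparse hcol hγ hRE (by positivity)
          (fun i => by simpa [hY] using hω i)
          (fun i => hlam ▸ abs_sub_mulVec_le_of_feasible hfeas i) hl1
    _ = (4 * σ / γ) * √(α * S * Real.log p) := by
        rw [mul_right_comm α, Real.sqrt_mul hαlog]
        ring

/-- Theorem 1, probabilistic form: with probability at least
`1 − 2 n p^{−α/2}`, every feasible `β̂` with `‖β̂‖₁ ≤ ‖β*‖₁` satisfies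
`‖β̂ − β*‖₂ ≤ (4σ/γ) √(α S log p)`. -/
theorem estimation_error_prob
    {Ω : Type*} [MeasureSpace Ω] [IsProbabilityMeasure (ℙ : Measure Ω)]
    (n p : ℕ) (hn : 1 ≤ n) (hp : 2 ≤ p) (σ : ℝ) (hσ : 0 < σ)
    (X : Matrix (Fin n) (Fin p) ℝ) (βstar : Fin p → ℝ)
    (S : ℕ) (hS : 0 < S)
    (hsparse : (Finset.univ.filter (fun j => βstar j ≠ 0)).card ≤ S)
    (hcol : ∀ j, Real.sqrt (∑ i, (X i j) ^ 2) ≤ Real.sqrt n)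
    (γ : ℝ) (hγ : 0 < γ)
    (hRE : ∀ ν : Fin p → ℝ, inCone βstar ν →
      γ * ∑ j, (ν j) ^ 2 ≤ (1 / (n : ℝ)) * ∑ i, (X.mulVec ν i) ^ 2)
    (ε : Fin n → Ω → ℝ)
    (hmeas : ∀ i, Measurable (ε i))
    (hmean : ∀ i, ∫ ω, ε i ω = 0)
    (hindep : iIndepFun ε ℙ)
    (hsub : ∀ i, ∀ t : ℝ, 0 ≤ t →
      ℙ {ω | t < |ε i ω|} ≤ ENNReal.ofReal (2 * Real.exp (-(t ^ 2) / (2 * σ ^ 2))))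
    (Y : Ω → Fin n → ℝ)
    (hY : ∀ ω, ∀ i, Y ω i = X.mulVec βstar i + ε i ω)
    (α : ℝ) (hα : 2 < α)
    (lam₀ : ℝ) (hlam₀ : lam₀ = σ * Real.sqrt (α * Real.log p / n)) :
    ENNReal.ofReal (1 - 2 * n * (p : ℝ) ^ (-(α / 2)))
      ≤ ℙ {ω | ∀ βhat : Fin p → ℝ,
            feasible (Y ω) X lam₀ βhat → (∑ j, |βhat j|) ≤ (∑ j, |βstar j|) →
            Real.sqrt (∑ j, (βhat j - βstar j) ^ 2)
              ≤ (4 * σ / γ) * Real.sqrt (α * S * Real.log p)} :=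
  estimation_error_prob_general n p hn hp σ hσ X βstar S hsparse hcol γ hγ hRE ε hsub Y hY α hα lam₀
    hlam₀
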